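/- For every left R-module M there exist index sets I₁, I₂, J₁, J₂ such that M is isomorphic to the direct sum χ₁^{⊕I₁} ⊕ χ₂^{⊕I₂} ⊕ (Re₁)^{⊕J₁} ⊕ (Re₂)^{⊕J₂}, where Reᵢ denotes the left ideal of R generated by eᵢ. -/

import Mathlib

universe u

open FreeAlgebra

/-- The defining relations of the algebra `R`: generator `0` is `e₁`, generator `1`
is `e₂`, generator `2` is `T`, subject to `e₁ + e₂ = 1`, `eᵢ² = eᵢ`, `e₁e₂ = e₂e₁ = 0`,
`e₁T = Te₂`, `e₂T = Te₁`, `T² = 0`. -/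
inductive RRel (k : Type u) [Field k] :
    FreeAlgebra k (Fin 3) → FreeAlgebra k (Fin 3) → Prop
  | unit : RRel k (ι k 0 + ι k 1) 1
  | idem₁ : RRel k (ι k 0 * ι k 0) (ι k 0)
  | idem₂ : RRel k (ι k 1 * ι k 1) (ι k 1)
  | orth₁₂ : RRel k (ι k 0 * ι k 1) 0
  | orth₂₁ : RRel k (ι k 1 * ι k 0) 0
  | comm₁ : RRel k (ι k 0 * ι k 2) (ι k 2 * ι k 1)
  | comm₂ : RRel k (ι k 1 * ι k 2) (ι k 2 * ι k 0)
  | sq : RRel k (ι k 2 * ι k 2) 0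

/-- The `k`-algebra `R` on generators `e₁, e₂, T` with the relations above. -/
abbrev RAlg (k : Type u) [Field k] : Type u := RingQuot (RRel k)

variable (k : Type u) [Field k]

/-- The idempotent `e₁ ∈ R`. -/
noncomputable def eR (i : Fin 2) : RAlg k := RingQuot.mkAlgHom k (RRel k) (ι k i.castSucc)

/-- The element `T ∈ R`. -/
noncomputable def TR : RAlg k := RingQuot.mkAlgHom k (RRel k) (ι k 2)

/-- The character `χᵢ : R → k` (for `i : Fin 2`; `i = 0` corresponds to `χ₁` and
`i = 1` to `χ₂`), sending `T` to `0`, `eᵢ₊₁` to `1` and the other idempotent to `0`. -/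
noncomputable def chiHom (i : Fin 2) : RAlg k →ₐ[k] k :=
  RingQuot.liftAlgHom k
    ⟨FreeAlgebra.lift k (fun j : Fin 3 => if (j : ℕ) = (i : ℕ) then (1 : k) else 0), by
      intro x y h
      induction h <;> fin_cases i <;>
        simp [FreeAlgebra.lift_ι_apply]⟩

/-- The 1-dimensional `R`-module `χᵢ` (a type synonym for `k`). -/
def ChiMod (k : Type u) [Field k] (_i : Fin 2) : Type u := k

noncomputable instance (i : Fin 2) : AddCommGroup (ChiMod k i) :=
  inferInstanceAs (AddCommGroup k)

noncomputable instance (i : Fin 2) : Module (RAlg k) (ChiMod k i) :=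
  Module.compHom k (chiHom k i).toRingHom

/-- The left ideal `Reᵢ`, i.e. the `R`-submodule of `R` generated by `eᵢ`. -/
noncomputable def ReMod (i : Fin 2) : Submodule (RAlg k) (RAlg k) :=
  Submodule.span (RAlg k) {eR k i}

/-!
STATEMENT 6: Every left `R`-module is isomorphic to a direct sum
`χ₁^{⊕I₁} ⊕ χ₂^{⊕I₂} ⊕ (Re₁)^{⊕J₁} ⊕ (Re₂)^{⊕J₂}` for suitable index sets.
-/


-- relations
lemma eR0_def : eR k 0 = RingQuot.mkAlgHom k (RRel k) (ι k 0) := rfl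
lemma eR1_def : eR k 1 = RingQuot.mkAlgHom k (RRel k) (ι k 1) := rfl

lemma rel_unit : eR k 0 + eR k 1 = 1 := by
  rw [eR0_def, eR1_def, ← map_add, RingQuot.mkAlgHom_rel k RRel.unit, map_one]

lemma rel_idem (i : Fin 2) : eR k i * eR k i = eR k i := by
  fin_cases i
  · show eR k 0 * eR k 0 = eR k 0
    rw [eR0_def, ← map_mul, RingQuot.mkAlgHom_rel k RRel.idem₁]
  · show eR k 1 * eR k 1 = eR k 1
    rw [eR1_def, ← map_mul, RingQuot.mkAlgHom_rel k RRel.idem₂]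

lemma rel_orth (i : Fin 2) : eR k i * eR k (1 - i) = 0 := by
  fin_cases i
  · show eR k 0 * eR k 1 = 0
    rw [eR0_def, eR1_def, ← map_mul, RingQuot.mkAlgHom_rel k RRel.orth₁₂, map_zero]
  · show eR k 1 * eR k 0 = 0
    rw [eR0_def, eR1_def, ← map_mul, RingQuot.mkAlgHom_rel k RRel.orth₂₁, map_zero]

lemma rel_comm (i : Fin 2) : eR k i * TR k = TR k * eR k (1 - i) := by
  fin_cases i
  · show eR k 0 * TR k = TR k * eR k 1
    rw [eR0_def, eR1_def, TR, ← map_mul, ← map_mul, RingQuot.mkAlgHom_rel k RRel.comm₁]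
  · show eR k 1 * TR k = TR k * eR k 0
    rw [eR0_def, eR1_def, TR, ← map_mul, ← map_mul, RingQuot.mkAlgHom_rel k RRel.comm₂]

lemma rel_sq : TR k * TR k = 0 := by
  rw [TR, ← map_mul, RingQuot.mkAlgHom_rel k RRel.sq, map_zero]

lemma chi_e (i j : Fin 2) : chiHom k i (eR k j) = if j = i then 1 else 0 := by
  fin_cases i <;> fin_cases j <;>
    simp [chiHom, eR, RingQuot.liftAlgHom_mkAlgHom_apply, FreeAlgebra.lift_ι_apply]

lemma chi_T (i : Fin 2) : chiHom k i (TR k) = 0 := by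
  fin_cases i <;>
    simp [chiHom, TR, RingQuot.liftAlgHom_mkAlgHom_apply, FreeAlgebra.lift_ι_apply]

lemma chiMod_smul (i : Fin 2) (r : RAlg k) (a : ChiMod k i) :
    r • a = (chiHom k i r * (show k from a) : k) := rfl

-- complement inside a submodule
lemma exists_compl_le {K : Type*} {V : Type*} [Field K] [AddCommGroup V] [Module K V]
    {p q : Submodule K V} (h : p ≤ q) :
    ∃ c : Submodule K V, c ≤ q ∧ p ⊓ c = ⊥ ∧ p ⊔ c = q := by
  obtain ⟨c', hc'⟩ := Submodule.exists_isCompl (p.comap q.subtype)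
  refine ⟨c'.map q.subtype, Submodule.map_subtype_le q c', ?_, ?_⟩
  · rw [eq_bot_iff]
    rintro x ⟨hxp, hxc⟩
    obtain ⟨⟨y, hyq⟩, hyc', rfl⟩ := hxc
    have : (⟨y, hyq⟩ : q) ∈ p.comap q.subtype ⊓ c' := ⟨hxp, hyc'⟩
    rw [hc'.inf_eq_bot] at this
    simpa using congrArg (q.subtype) this
  · have : p = (p.comap q.subtype).map q.subtype := by
      rw [Submodule.map_comap_subtype, inf_eq_right.mpr h]
    rw [this, ← Submodule.map_sup, hc'.sup_eq_top, Submodule.map_top,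
      Submodule.range_subtype]

section ModuleAux

variable {k}
variable (M : Type u) [AddCommGroup M] [Module (RAlg k) M] [Module k M]
  [IsScalarTower k (RAlg k) M] [SMulCommClass (RAlg k) k M]

/-- The action of `s : RAlg k` as a `k`-linear endomorphism of `M`. -/
noncomputable def actMap (s : RAlg k) : M →ₗ[k] M where
  toFun m := s • m
  map_add' := smul_add s
  map_smul' c m := smul_comm s c m

@[simp] lemma actMap_apply (s : RAlg k) (m : M) : actMap M s m = s • m := rfl

variable {M}

lemma eigen {i : Fin 2} {v : M} (he : ∀ j, eR k j • v = if j = i then v else 0)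
    (ht : TR k • v = 0) (r : RAlg k) : r • v = chiHom k i r • v := by
  obtain ⟨x, rfl⟩ := RingQuot.mkAlgHom_surjective k (RRel k) r
  induction x using FreeAlgebra.induction with
  | grade0 c =>
    rw [AlgHom.commutes, AlgHom.commutes, algebraMap_smul]
    simp
  | grade1 j =>
    fin_cases j
    · show RingQuot.mkAlgHom k (RRel k) (ι k 0) • v =
        chiHom k i (RingQuot.mkAlgHom k (RRel k) (ι k 0)) • v
      rw [← eR0_def, he 0, chi_e]
      split_ifs <;> simp
    · show RingQuot.mkAlgHom k (RRel k) (ι k 1) • v =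
        chiHom k i (RingQuot.mkAlgHom k (RRel k) (ι k 1)) • v
      rw [← eR1_def, he 1, chi_e]
      split_ifs <;> simp
    · show RingQuot.mkAlgHom k (RRel k) (ι k 2) • v =
        chiHom k i (RingQuot.mkAlgHom k (RRel k) (ι k 2)) • v
      rw [show RingQuot.mkAlgHom k (RRel k) (ι k 2) = TR k from rfl, ht, chi_T]
      simp
  | mul a b iha ihb =>
    rw [map_mul, map_mul, mul_smul, ihb, smul_comm, iha, smul_smul, mul_comm]
  | add a b iha ihb =>
    rw [map_add, map_add, add_smul, add_smul, iha, ihb]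

end ModuleAux

/-- `R·eᵢ` is contained in the `k`-span of `eᵢ` and `T·eᵢ`. -/
lemma mul_mem_spanRe (i : Fin 2) (r : RAlg k) :
    ∀ z ∈ Submodule.span k {eR k i, TR k * eR k i},
      r * z ∈ Submodule.span k {eR k i, TR k * eR k i} := by
  set sp := Submodule.span k {eR k i, TR k * eR k i} with hsp
  have mem1 : eR k i ∈ sp := Submodule.subset_span (by left; rfl)
  have mem2 : TR k * eR k i ∈ sp := Submodule.subset_span (by right; rfl)
  have key : ∀ s : RAlg k, s * eR k i ∈ sp → s * (TR k * eR k i) ∈ sp →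
      ∀ z ∈ sp, s * z ∈ sp := by
    intro s h1 h2 z hz
    refine Submodule.span_induction ?_ ?_ ?_ ?_ hz
    · rintro x (rfl | rfl)
      · exact h1
      · exact h2
    · simp
    · intro x y _ _ hx hy
      rw [mul_add]; exact sp.add_mem hx hy
    · intro c x _ hx
      rw [mul_smul_comm]; exact sp.smul_mem c hx
  obtain ⟨x, rfl⟩ := RingQuot.mkAlgHom_surjective k (RRel k) r
  induction x using FreeAlgebra.induction with
  | grade0 c =>
    intro z hz
    rw [AlgHom.commutes, ← Algebra.smul_def]
    exact sp.smul_mem c hz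
  | grade1 j =>
    have hTe : ∀ i' : Fin 2, TR k * (TR k * eR k i') ∈ sp := by
      intro i'; rw [← mul_assoc, rel_sq, zero_mul]; exact sp.zero_mem
    have hee : ∀ i' j' : Fin 2, eR k j' * eR k i' = if j' = i' then eR k i' else 0 := by
      intro i' j'
      fin_cases i' <;> fin_cases j' <;>
        simp only [Fin.mk_one, Fin.zero_eta, Fin.isValue] <;>
        first
          | simpa using rel_idem k 0
          | simpa using rel_idem k 1
          | simpa using rel_orth k 0
          | simpa using rel_orth k 1
    fin_cases j
    · refine key _ ?_ ?_
      · show eR k 0 * eR k i ∈ sp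
        rw [hee i 0]; split_ifs <;> simp [mem1]
      · show eR k 0 * (TR k * eR k i) ∈ sp
        rw [← mul_assoc, rel_comm k 0, show (1 - 0 : Fin 2) = 1 by decide, mul_assoc, hee i 1]
        split_ifs with h
        · exact mem2
        · rw [mul_zero]; exact sp.zero_mem
    · refine key _ ?_ ?_
      · show eR k 1 * eR k i ∈ sp
        rw [hee i 1]; split_ifs <;> simp [mem1]
      · show eR k 1 * (TR k * eR k i) ∈ sp
        rw [← mul_assoc, rel_comm k 1, show (1 - 1 : Fin 2) = 0 by decide, mul_assoc, hee i 0]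
        split_ifs with h
        · exact mem2
        · rw [mul_zero]; exact sp.zero_mem
    · refine key _ ?_ ?_
      · exact mem2
      · exact hTe i
  | mul a b iha ihb =>
    intro z hz
    rw [map_mul, mul_assoc]
    exact iha _ (ihb z hz)
  | add a b iha ihb =>
    intro z hz
    rw [map_add, add_mul]
    exact sp.add_mem (iha z hz) (ihb z hz)

lemma ReMod_le_span (i : Fin 2) :
    ∀ z ∈ ReMod k i, z ∈ Submodule.span k {eR k i, TR k * eR k i} := by
  intro z hz
  rw [ReMod, Submodule.mem_span_singleton] at hz
  obtain ⟨r, rfl⟩ := hz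
  rw [smul_eq_mul]
  exact mul_mem_spanRe k i r _ (Submodule.subset_span (by left; rfl))

noncomputable instance instFinsuppReModAddCommGroup (i : Fin 2) (C : Type u) :
    AddCommGroup (C →₀ ↥(ReMod k i)) :=
  @Finsupp.instAddCommGroup C ↥(ReMod k i) inferInstance

lemma split_zero {K : Type*} {V : Type*} [Field K] [AddCommGroup V] [Module K V]
    {P Q : Submodule K V} (h : P ⊓ Q = ⊥) {x y : V} (hx : x ∈ P) (hy : y ∈ Q)
    (hxy : x + y = 0) : x = 0 ∧ y = 0 := by
  have hxy' : x = -y := eq_neg_of_add_eq_zero_left hxy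
  have : x ∈ P ⊓ Q := ⟨hx, hxy' ▸ Q.neg_mem hy⟩
  rw [h, Submodule.mem_bot] at this
  refine ⟨this, ?_⟩
  have := hxy' ▸ this
  simpa [neg_eq_zero] using this.symm

set_option synthInstance.maxHeartbeats 400000 in
set_option maxHeartbeats 1000000 in
theorem stmt_6 (M : Type u) [AddCommGroup M] [Module (RAlg k) M] :
    ∃ (I₁ I₂ J₁ J₂ : Type u),
      Nonempty (M ≃ₗ[RAlg k]
        ((I₁ →₀ ChiMod k 0) × (I₂ →₀ ChiMod k 1) ×
          (J₁ →₀ ↥(ReMod k 0)) × (J₂ →₀ ↥(ReMod k 1)))) := by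
  classical
  letI instkM : Module k M := Module.compHom M (algebraMap k (RAlg k))
  haveI instTower : IsScalarTower k (RAlg k) M := ⟨fun c s m => by
    rw [Algebra.smul_def, mul_smul]; rfl⟩
  haveI instComm : SMulCommClass (RAlg k) k M := ⟨fun s c m => by
    show s • (algebraMap k (RAlg k) c) • m = (algebraMap k (RAlg k) c) • (s • m)
    rw [← mul_smul, ← Algebra.commutes, mul_smul]⟩
  haveI instComm' : SMulCommClass k (RAlg k) M := SMulCommClass.symm _ _ _
  -- the action of `T` as a `k`-linear endomorphism, and the basic subspaces
  set τ : M →ₗ[k] M := actMap M (TR k) with hτdef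
  set U1 : Submodule k M := LinearMap.ker (actMap M (eR k 1)) with hU1def
  set U2 : Submodule k M := LinearMap.ker (actMap M (eR k 0)) with hU2def
  have hmemU1 : ∀ m : M, m ∈ U1 ↔ eR k 1 • m = 0 := fun m => Iff.rfl
  have hmemU2 : ∀ m : M, m ∈ U2 ↔ eR k 0 • m = 0 := fun m => Iff.rfl
  have hτapp : ∀ m : M, τ m = TR k • m := fun m => rfl
  have hone : ∀ m : M, eR k 0 • m + eR k 1 • m = m := by
    intro m
    rw [← add_smul, rel_unit, one_smul]
  have hU1e : ∀ m ∈ U1, eR k 0 • m = m := by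
    intro m hm
    have := hone m
    rwa [(hmemU1 m).mp hm, add_zero] at this
  have hU2e : ∀ m ∈ U2, eR k 1 • m = m := by
    intro m hm
    have := hone m
    rwa [(hmemU2 m).mp hm, zero_add] at this
  have hτ12 : ∀ m ∈ U1, τ m ∈ U2 := by
    intro m hm
    rw [hmemU2, hτapp, smul_smul, rel_comm k 0, show (1-0 : Fin 2) = 1 by decide,
      ← smul_smul, (hmemU1 m).mp hm, smul_zero]
  have hτ21 : ∀ m ∈ U2, τ m ∈ U1 := by
    intro m hm
    rw [hmemU1, hτapp, smul_smul, rel_comm k 1, show (1-1 : Fin 2) = 0 by decide,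
      ← smul_smul, (hmemU2 m).mp hm, smul_zero]
  have hττ : ∀ m : M, τ (τ m) = 0 := by
    intro m
    rw [hτapp, hτapp, smul_smul, rel_sq, zero_smul]
  set K1 : Submodule k M := U1 ⊓ LinearMap.ker τ with hK1def
  set K2 : Submodule k M := U2 ⊓ LinearMap.ker τ with hK2def
  set I1 : Submodule k M := Submodule.map τ U2 with hI1def
  set I2 : Submodule k M := Submodule.map τ U1 with hI2def
  have hI1K1 : I1 ≤ K1 := by
    rintro _ ⟨m, hm, rfl⟩
    exact ⟨hτ21 m hm, hττ m⟩
  have hI2K2 : I2 ≤ K2 := by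
    rintro _ ⟨m, hm, rfl⟩
    exact ⟨hτ12 m hm, hττ m⟩
  have hK1U1 : K1 ≤ U1 := inf_le_left
  have hK2U2 : K2 ≤ U2 := inf_le_left
  obtain ⟨C1, hC1K1, hC1disj, hC1sup⟩ := exists_compl_le hI1K1
  obtain ⟨C2, hC2K2, hC2disj, hC2sup⟩ := exists_compl_le hI2K2
  obtain ⟨W1, hW1U1, hW1disj, hW1sup⟩ := exists_compl_le hK1U1
  obtain ⟨W2, hW2U2, hW2disj, hW2sup⟩ := exists_compl_le hK2U2
  have hU12inf : U1 ⊓ U2 = ⊥ := by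
    rw [eq_bot_iff]
    rintro m ⟨h1, h2⟩
    rw [Submodule.mem_bot]
    rw [← hone m, (hmemU1 m).mp h1, (hmemU2 m).mp h2, add_zero]
  -- bases
  set bC1 := Module.Basis.ofVectorSpace k C1 with hbC1
  set bC2 := Module.Basis.ofVectorSpace k C2 with hbC2
  set bW1 := Module.Basis.ofVectorSpace k W1 with hbW1
  set bW2 := Module.Basis.ofVectorSpace k W2 with hbW2
  set c1 : Module.Basis.ofVectorSpaceIndex k C1 → M := fun i => (bC1 i : M) with hc1def
  set c2 : Module.Basis.ofVectorSpaceIndex k C2 → M := fun i => (bC2 i : M) with hc2def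
  set w1 : Module.Basis.ofVectorSpaceIndex k W1 → M := fun i => (bW1 i : M) with hw1def
  set w2 : Module.Basis.ofVectorSpaceIndex k W2 → M := fun i => (bW2 i : M) with hw2def
  have hc1 : ∀ i, c1 i ∈ C1 := fun i => (bC1 i).2
  have hc2 : ∀ i, c2 i ∈ C2 := fun i => (bC2 i).2
  have hw1 : ∀ i, w1 i ∈ W1 := fun i => (bW1 i).2
  have hw2 : ∀ i, w2 i ∈ W2 := fun i => (bW2 i).2
  have hc1ind : LinearIndependent k c1 :=
    bC1.linearIndependent.map' C1.subtype (Submodule.ker_subtype C1)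
  have hc2ind : LinearIndependent k c2 :=
    bC2.linearIndependent.map' C2.subtype (Submodule.ker_subtype C2)
  have hw1ind : LinearIndependent k w1 :=
    bW1.linearIndependent.map' W1.subtype (Submodule.ker_subtype W1)
  have hw2ind : LinearIndependent k w2 :=
    bW2.linearIndependent.map' W2.subtype (Submodule.ker_subtype W2)
  have hc1span : Submodule.span k (Set.range c1) = C1 := by
    rw [hc1def, show (fun i => (bC1 i : M)) = C1.subtype ∘ bC1 from rfl, Set.range_comp,
      ← Submodule.map_span, bC1.span_eq, Submodule.map_top, Submodule.range_subtype]
  have hc2span : Submodule.span k (Set.range c2) = C2 := by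
    rw [hc2def, show (fun i => (bC2 i : M)) = C2.subtype ∘ bC2 from rfl, Set.range_comp,
      ← Submodule.map_span, bC2.span_eq, Submodule.map_top, Submodule.range_subtype]
  have hw1span : Submodule.span k (Set.range w1) = W1 := by
    rw [hw1def, show (fun i => (bW1 i : M)) = W1.subtype ∘ bW1 from rfl, Set.range_comp,
      ← Submodule.map_span, bW1.span_eq, Submodule.map_top, Submodule.range_subtype]
  have hw2span : Submodule.span k (Set.range w2) = W2 := by
    rw [hw2def, show (fun i => (bW2 i : M)) = W2.subtype ∘ bW2 from rfl, Set.range_comp,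
      ← Submodule.map_span, bW2.span_eq, Submodule.map_top, Submodule.range_subtype]
  -- eigen-properties of the basis vectors
  have hc1eig : ∀ i (j : Fin 2), eR k j • c1 i = if j = 0 then c1 i else 0 := by
    intro i j
    have hK : c1 i ∈ K1 := hC1K1 (hc1 i)
    fin_cases j
    · simpa using hU1e (c1 i) (hK1U1 hK)
    · simpa using (hmemU1 (c1 i)).mp (hK1U1 hK)
  have hc2eig : ∀ i (j : Fin 2), eR k j • c2 i = if j = 1 then c2 i else 0 := by
    intro i j
    have hK : c2 i ∈ K2 := hC2K2 (hc2 i)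
    fin_cases j
    · simpa using (hmemU2 (c2 i)).mp (hK2U2 hK)
    · simpa using hU2e (c2 i) (hK2U2 hK)
  have hc1T : ∀ i, TR k • c1 i = 0 := fun i => (hC1K1 (hc1 i)).2
  have hc2T : ∀ i, TR k • c2 i = 0 := fun i => (hC2K2 (hc2 i)).2
  have hw1e : ∀ j, eR k 0 • w1 j = w1 j := fun j => hU1e (w1 j) (hW1U1 (hw1 j))
  have hw2e : ∀ j, eR k 1 • w2 j = w2 j := fun j => hU2e (w2 j) (hW2U2 (hw2 j))
  -- the component maps
  set ψ1 : Module.Basis.ofVectorSpaceIndex k C1 → (ChiMod k 0 →ₗ[RAlg k] M) := fun i =>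
    { toFun := fun a => (show k from a) • c1 i
      map_add' := fun a b => add_smul _ _ _
      map_smul' := fun r a => by
        show (chiHom k 0 r * (show k from a)) • c1 i = r • ((show k from a) • c1 i)
        rw [mul_comm, mul_smul, ← eigen (hc1eig i) (hc1T i) r, smul_comm] } with hψ1
  set ψ2 : Module.Basis.ofVectorSpaceIndex k C2 → (ChiMod k 1 →ₗ[RAlg k] M) := fun i =>
    { toFun := fun a => (show k from a) • c2 i
      map_add' := fun a b => add_smul _ _ _
      map_smul' := fun r a => by
        show (chiHom k 1 r * (show k from a)) • c2 i = r • ((show k from a) • c2 i)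
        rw [mul_comm, mul_smul, ← eigen (hc2eig i) (hc2T i) r, smul_comm] } with hψ2
  set φ1 : Module.Basis.ofVectorSpaceIndex k W1 → (↥(ReMod k 0) →ₗ[RAlg k] M) := fun j =>
    (LinearMap.toSpanSingleton (RAlg k) M (w1 j)).comp (ReMod k 0).subtype with hφ1
  set φ2 : Module.Basis.ofVectorSpaceIndex k W2 → (↥(ReMod k 1) →ₗ[RAlg k] M) := fun j =>
    (LinearMap.toSpanSingleton (RAlg k) M (w2 j)).comp (ReMod k 1).subtype with hφ2
  set Φ := (Finsupp.lsum ℕ ψ1).coprod ((Finsupp.lsum ℕ ψ2).coprod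
    ((Finsupp.lsum ℕ φ1).coprod (Finsupp.lsum ℕ φ2))) with hΦdef
  have hΦ : ∀ (a : (Module.Basis.ofVectorSpaceIndex k C1) →₀ ChiMod k 0)
      (b : (Module.Basis.ofVectorSpaceIndex k C2) →₀ ChiMod k 1)
      (p : (Module.Basis.ofVectorSpaceIndex k W1) →₀ ↥(ReMod k 0))
      (q : (Module.Basis.ofVectorSpaceIndex k W2) →₀ ↥(ReMod k 1)),
      Φ (a, b, p, q) = (a.sum fun i x => (show k from x) • c1 i) +
        ((b.sum fun i x => (show k from x) • c2 i) +
        ((p.sum fun j z => (z : RAlg k) • w1 j) +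
         (q.sum fun j z => (z : RAlg k) • w2 j))) := by
    intro a b p q
    rw [hΦdef]
    simp only [LinearMap.coprod_apply, Finsupp.lsum_apply]
    rfl
  have hbij : Function.Bijective Φ := by
    constructor
    · -- injectivity
      have hker : ∀ z, Φ z = 0 → z = 0 := by
        rintro ⟨a, b, p, q⟩ h
        rw [hΦ] at h
        have hpc : ∀ j, ∃ x y : k, (p j : RAlg k) = x • eR k 0 + y • (TR k * eR k 0) := by
          intro j
          have h1 := ReMod_le_span k 0 (p j).1 (p j).2
          rw [Submodule.mem_span_pair] at h1
          obtain ⟨x, y, hxy⟩ := h1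
          exact ⟨x, y, hxy.symm⟩
        have hqc : ∀ j, ∃ x y : k, (q j : RAlg k) = x • eR k 1 + y • (TR k * eR k 1) := by
          intro j
          have h1 := ReMod_le_span k 1 (q j).1 (q j).2
          rw [Submodule.mem_span_pair] at h1
          obtain ⟨x, y, hxy⟩ := h1
          exact ⟨x, y, hxy.symm⟩
        choose X1 Y1 hXY1 using hpc
        choose X2 Y2 hXY2 using hqc
        have hps : (p.sum fun j z => (z : RAlg k) • w1 j) =
            (∑ j ∈ p.support, X1 j • w1 j) + ∑ j ∈ p.support, Y1 j • τ (w1 j) := by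
          rw [Finsupp.sum, ← Finset.sum_add_distrib]
          refine Finset.sum_congr rfl fun j _ => ?_
          rw [hXY1 j, add_smul, smul_assoc, hw1e j, smul_assoc, mul_smul, hw1e j, hτapp]
        have hqs : (q.sum fun j z => (z : RAlg k) • w2 j) =
            (∑ j ∈ q.support, X2 j • w2 j) + ∑ j ∈ q.support, Y2 j • τ (w2 j) := by
          rw [Finsupp.sum, ← Finset.sum_add_distrib]
          refine Finset.sum_congr rfl fun j _ => ?_
          rw [hXY2 j, add_smul, smul_assoc, hw2e j, smul_assoc, mul_smul, hw2e j, hτapp]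
        rw [hps, hqs] at h
        set S1 := a.sum fun i x => (show k from x) • c1 i with hS1def
        set S2 := b.sum fun i x => (show k from x) • c2 i with hS2def
        set S3 := ∑ j ∈ p.support, X1 j • w1 j with hS3def
        set S4 := ∑ j ∈ p.support, Y1 j • τ (w1 j) with hS4def
        set S5 := ∑ j ∈ q.support, X2 j • w2 j with hS5def
        set S6 := ∑ j ∈ q.support, Y2 j • τ (w2 j) with hS6def
        have hS1m : S1 ∈ C1 :=
          Submodule.finsuppSum_mem _ _ _ _ fun i _ => C1.smul_mem _ (hc1 i)
        have hS2m : S2 ∈ C2 :=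
          Submodule.finsuppSum_mem _ _ _ _ fun i _ => C2.smul_mem _ (hc2 i)
        have hS3m : S3 ∈ W1 :=
          Submodule.sum_mem _ fun j _ => W1.smul_mem _ (hw1 j)
        have hS5m : S5 ∈ W2 :=
          Submodule.sum_mem _ fun j _ => W2.smul_mem _ (hw2 j)
        have hS4m : S4 ∈ I2 :=
          Submodule.sum_mem _ fun j _ => I2.smul_mem _ ⟨w1 j, hW1U1 (hw1 j), rfl⟩
        have hS6m : S6 ∈ I1 :=
          Submodule.sum_mem _ fun j _ => I1.smul_mem _ ⟨w2 j, hW2U2 (hw2 j), rfl⟩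
        have hu : (S1 + (S3 + S6)) + (S2 + (S4 + S5)) = 0 := by rw [← h]; abel
        have hu1m : S1 + (S3 + S6) ∈ U1 :=
          U1.add_mem (hK1U1 (hC1K1 hS1m))
            (U1.add_mem (hW1U1 hS3m) (hK1U1 (hI1K1 hS6m)))
        have hu2m : S2 + (S4 + S5) ∈ U2 :=
          U2.add_mem (hK2U2 (hC2K2 hS2m))
            (U2.add_mem (hK2U2 (hI2K2 hS4m)) (hW2U2 hS5m))
        obtain ⟨hu1z, hu2z⟩ := split_zero hU12inf hu1m hu2m hu
        have h13 : (S6 + S1) + S3 = 0 := by rw [← hu1z]; abel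
        obtain ⟨h61z, h3z⟩ := split_zero hW1disj
          (K1.add_mem (hI1K1 hS6m) (hC1K1 hS1m)) hS3m h13
        obtain ⟨h6z, h1z⟩ := split_zero hC1disj hS6m hS1m h61z
        have h24 : (S4 + S2) + S5 = 0 := by rw [← hu2z]; abel
        obtain ⟨h42z, h5z⟩ := split_zero hW2disj
          (K2.add_mem (hI2K2 hS4m) (hC2K2 hS2m)) hS5m h24
        obtain ⟨h4z, h2z⟩ := split_zero hC2disj hS4m hS2m h42z
        have hτw1ind : LinearIndependent k fun j => τ (w1 j) := by
          refine hw1ind.map (f := τ) ?_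
          rw [hw1span, disjoint_iff]
          refine le_bot_iff.mp ?_
          rw [← hW1disj]
          rintro x ⟨hxW, hxk⟩
          exact ⟨⟨hW1U1 hxW, hxk⟩, hxW⟩
        have hτw2ind : LinearIndependent k fun j => τ (w2 j) := by
          refine hw2ind.map (f := τ) ?_
          rw [hw2span, disjoint_iff]
          refine le_bot_iff.mp ?_
          rw [← hW2disj]
          rintro x ⟨hxW, hxk⟩
          exact ⟨⟨hW2U2 hxW, hxk⟩, hxW⟩
        have hX1 : ∀ j ∈ p.support, X1 j = 0 :=
          linearIndependent_iff'.mp hw1ind p.support X1 h3z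
        have hY1 : ∀ j ∈ p.support, Y1 j = 0 :=
          linearIndependent_iff'.mp hτw1ind p.support Y1 h4z
        have hX2 : ∀ j ∈ q.support, X2 j = 0 :=
          linearIndependent_iff'.mp hw2ind q.support X2 h5z
        have hY2 : ∀ j ∈ q.support, Y2 j = 0 :=
          linearIndependent_iff'.mp hτw2ind q.support Y2 h6z
        have ha : a = 0 := by
          have hli := linearIndependent_iff'.mp hc1ind a.support
            (fun i => show k from a i) h1z
          ext i
          by_cases hi : i ∈ a.support
          · exact hli i hi
          · exact Finsupp.notMem_support_iff.mp hi
        have hb : b = 0 := by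
          have hli := linearIndependent_iff'.mp hc2ind b.support
            (fun i => show k from b i) h2z
          ext i
          by_cases hi : i ∈ b.support
          · exact hli i hi
          · exact Finsupp.notMem_support_iff.mp hi
        have hp0 : p = 0 := by
          ext j
          by_cases hj : j ∈ p.support
          · have : (p j : RAlg k) = 0 := by
              rw [hXY1 j, hX1 j hj, hY1 j hj, zero_smul, zero_smul, add_zero]
            exact congrArg _ (Subtype.ext this)
          · exact congrArg _ (Finsupp.notMem_support_iff.mp hj)
        have hq0 : q = 0 := by
          ext j
          by_cases hj : j ∈ q.support
          · have : (q j : RAlg k) = 0 := by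
              rw [hXY2 j, hX2 j hj, hY2 j hj, zero_smul, zero_smul, add_zero]
            exact congrArg _ (Subtype.ext this)
          · exact congrArg _ (Finsupp.notMem_support_iff.mp hj)
        rw [ha, hb, hp0, hq0]
        rfl
      intro z1 z2 h12
      have h0 : Φ (z1 - z2) = 0 := by rw [map_sub, h12, sub_self]
      have h1 := hker _ h0
      exact sub_eq_zero.mp h1
    · -- surjectivity
      have hC1R : C1 ≤ Submodule.restrictScalars k (LinearMap.range Φ) := by
        refine le_of_eq_of_le hc1span.symm (Submodule.span_le.mpr ?_)
        rintro _ ⟨i, rfl⟩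
        refine ⟨(Finsupp.single i (show ChiMod k 0 from (1:k)), 0, 0, 0), ?_⟩
        rw [hΦ]
        erw [Finsupp.sum_single_index (h := fun i (x : ChiMod k 0) => (show k from x) • c1 i) (zero_smul k _),
          Finsupp.sum_zero_index]
        simp only [one_smul]
        abel
      have hC2R : C2 ≤ Submodule.restrictScalars k (LinearMap.range Φ) := by
        refine le_of_eq_of_le hc2span.symm (Submodule.span_le.mpr ?_)
        rintro _ ⟨i, rfl⟩
        refine ⟨(0, Finsupp.single i (show ChiMod k 1 from (1:k)), 0, 0), ?_⟩
        rw [hΦ]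
        erw [Finsupp.sum_single_index (h := fun i (x : ChiMod k 1) => (show k from x) • c2 i) (zero_smul k _),
          Finsupp.sum_zero_index]
        simp only [one_smul]
        abel
      have hW1R : W1 ≤ Submodule.restrictScalars k (LinearMap.range Φ) := by
        refine le_of_eq_of_le hw1span.symm (Submodule.span_le.mpr ?_)
        rintro _ ⟨j, rfl⟩
        refine ⟨(0, 0, Finsupp.single j ⟨eR k 0, Submodule.mem_span_singleton_self _⟩, 0), ?_⟩
        rw [hΦ]
        rw [Finsupp.sum_single_index (by rw [Submodule.coe_zero, zero_smul]),
          Finsupp.sum_zero_index, Finsupp.sum_zero_index, Finsupp.sum_zero_index]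
        show 0 + (0 + (eR k 0 • w1 j + 0)) = w1 j
        rw [hw1e j]
        abel
      have hW2R : W2 ≤ Submodule.restrictScalars k (LinearMap.range Φ) := by
        refine le_of_eq_of_le hw2span.symm (Submodule.span_le.mpr ?_)
        rintro _ ⟨j, rfl⟩
        refine ⟨(0, 0, 0, Finsupp.single j ⟨eR k 1, Submodule.mem_span_singleton_self _⟩), ?_⟩
        rw [hΦ]
        rw [Finsupp.sum_single_index (by rw [Submodule.coe_zero, zero_smul]),
          Finsupp.sum_zero_index, Finsupp.sum_zero_index, Finsupp.sum_zero_index]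
        show 0 + (0 + (0 + eR k 1 • w2 j)) = w2 j
        rw [hw2e j]
        abel
      have hτW1R : Submodule.map τ W1 ≤ Submodule.restrictScalars k (LinearMap.range Φ) := by
        refine le_of_eq_of_le (congrArg (Submodule.map τ) hw1span.symm) ?_
        rw [Submodule.map_span]
        refine Submodule.span_le.mpr ?_
        rintro _ ⟨_, ⟨j, rfl⟩, rfl⟩
        refine ⟨(0, 0, Finsupp.single j ⟨TR k * eR k 0,
          (Submodule.mem_span_singleton).mpr ⟨TR k, rfl⟩⟩, 0), ?_⟩
        rw [hΦ]
        rw [Finsupp.sum_single_index (by rw [Submodule.coe_zero, zero_smul]),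
          Finsupp.sum_zero_index, Finsupp.sum_zero_index, Finsupp.sum_zero_index]
        show 0 + (0 + ((TR k * eR k 0) • w1 j + 0)) = τ (w1 j)
        rw [mul_smul, hw1e j, hτapp]
        abel
      have hτW2R : Submodule.map τ W2 ≤ Submodule.restrictScalars k (LinearMap.range Φ) := by
        refine le_of_eq_of_le (congrArg (Submodule.map τ) hw2span.symm) ?_
        rw [Submodule.map_span]
        refine Submodule.span_le.mpr ?_
        rintro _ ⟨_, ⟨j, rfl⟩, rfl⟩
        refine ⟨(0, 0, 0, Finsupp.single j ⟨TR k * eR k 1,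
          (Submodule.mem_span_singleton).mpr ⟨TR k, rfl⟩⟩), ?_⟩
        rw [hΦ]
        rw [Finsupp.sum_single_index (by rw [Submodule.coe_zero, zero_smul]),
          Finsupp.sum_zero_index, Finsupp.sum_zero_index, Finsupp.sum_zero_index]
        show 0 + (0 + (0 + (TR k * eR k 1) • w2 j)) = τ (w2 j)
        rw [mul_smul, hw2e j, hτapp]
        abel
      have hI1R : I1 ≤ Submodule.restrictScalars k (LinearMap.range Φ) := by
        rintro _ ⟨m, hm, rfl⟩
        have hm' : m ∈ K2 ⊔ W2 := by rw [hW2sup]; exact hm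
        obtain ⟨x, hx, y, hy, rfl⟩ := Submodule.mem_sup.mp hm'
        rw [map_add, show τ x = 0 from hx.2, zero_add]
        exact hτW2R ⟨y, hy, rfl⟩
      have hI2R : I2 ≤ Submodule.restrictScalars k (LinearMap.range Φ) := by
        rintro _ ⟨m, hm, rfl⟩
        have hm' : m ∈ K1 ⊔ W1 := by rw [hW1sup]; exact hm
        obtain ⟨x, hx, y, hy, rfl⟩ := Submodule.mem_sup.mp hm'
        rw [map_add, show τ x = 0 from hx.2, zero_add]
        exact hτW1R ⟨y, hy, rfl⟩
      have hU1R : U1 ≤ Submodule.restrictScalars k (LinearMap.range Φ) := by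
        have h' : (I1 ⊔ C1) ⊔ W1 ≤ Submodule.restrictScalars k (LinearMap.range Φ) :=
          sup_le (sup_le hI1R hC1R) hW1R
        exact le_of_eq_of_le (by rw [hC1sup, hW1sup]) h'
      have hU2R : U2 ≤ Submodule.restrictScalars k (LinearMap.range Φ) := by
        have h' : (I2 ⊔ C2) ⊔ W2 ≤ Submodule.restrictScalars k (LinearMap.range Φ) :=
          sup_le (sup_le hI2R hC2R) hW2R
        exact le_of_eq_of_le (by rw [hC2sup, hW2sup]) h'
      intro m
      have horth10 : eR k 1 * eR k 0 = 0 := by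
        have := rel_orth k 1
        rwa [show (1-1 : Fin 2) = 0 by decide] at this
      have horth01 : eR k 0 * eR k 1 = 0 := by
        have := rel_orth k 0
        rwa [show (1-0 : Fin 2) = 1 by decide] at this
      have hm1 : eR k 0 • m ∈ U1 := by
        rw [hmemU1, smul_smul, horth10, zero_smul]
      have hm2 : eR k 1 • m ∈ U2 := by
        rw [hmemU2, smul_smul, horth01, zero_smul]
      have : eR k 0 • m + eR k 1 • m ∈ LinearMap.range Φ :=
        (LinearMap.range Φ).add_mem (hU1R hm1) (hU2R hm2)
      obtain ⟨z, hz⟩ := this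
      exact ⟨z, by rw [hz, hone]⟩

  exact ⟨_, _, _, _, ⟨(LinearEquiv.ofBijective Φ hbij).symm⟩⟩
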